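/- arXiv:2510.26679 — 2 statements merged into one kernel-verified Lean document; each statement's English description precedes it below -/
import Mathlib

section
/- Let M, M' ∈ R^{n×n} be symmetric with E = M' − M satisfying sqrt(Σ_{i,j}|(EE^⊤)_{ij}|) ≤ Δ, and let P, P' be the orthogonal projectors onto the spans of the top r singular vectors of M and M' respectively. If σ_r(M) − σ_{r+1}(M) > 2Δ, then ||P − P'||_F ≤ 4Δ·sqrt(r·μ_r(M)/n) / (σ_r(M) − σ_{r+1}(M)). -/
open Matrix BigOperators

/-- `projOfTopSV M σ r P` : `σ` lists the singular values of `M` in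
nonincreasing order (via a full SVD with orthonormal `u`, `v`) and `P` is the
orthogonal projector onto the span of the top `r` left singular vectors. -/
def projOfTopSV {n : ℕ} (M : Matrix (Fin n) (Fin n) ℝ) (σ : Fin n → ℝ) (r : ℕ)
    (P : Matrix (Fin n) (Fin n) ℝ) : Prop :=
  Antitone σ ∧ (∀ k, 0 ≤ σ k) ∧
  ∃ u v : Fin n → Fin n → ℝ,
    (∀ k l, ∑ i, u k i * u l i = if k = l then (1:ℝ) else 0) ∧
    (∀ k l, ∑ i, v k i * v l i = if k = l then (1:ℝ) else 0) ∧
    (∀ i j, M i j = ∑ k, σ k * u k i * v k j) ∧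
    (∀ i j, P i j = ∑ k : Fin n, if (k : ℕ) < r then u k i * u k j else 0)

/-!
Write `M = Uᵀ Σ V`, `M' = U'ᵀ Σ' V'`, `E = M' - M`, and `D` for the 0/1 diagonal mask of the
first `r` coordinates, so that `P = Uᵀ D U`. With `p = U U'ᵀ` and `q = V V'ᵀ` one has
`‖P - P'‖_F² = 2 ∑_{k < r ≤ l} p_kl²`, and (Wedin) `U E V'ᵀ = p Σ' - Σ q`, `V E U'ᵀ = q Σ' - Σ p`,
the latter by symmetry of `M` and `M'`. Weyl's inequality `σ'_r ≤ σ_r + ‖E‖_F` gives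
`σ_k - σ'_l ≥ δ := σ_{r-1} - σ_r - Δ` for `k < r ≤ l`, whence
`δ² p_kl² ≤ (U E V'ᵀ)_kl² + (V E U'ᵀ)_kl²`. Summed over `k < r` the right-hand side is
`2 tr (P E Eᵀ)`, because for symmetric `M` the gap forces the top `r` right singular vectors to
span the range of `P` as well. Hölder bounds `tr (P E Eᵀ)` by `‖P‖_∞ ∑ |(E Eᵀ)_ij| ≤ ‖P‖_∞ Δ²`,
and `δ > (σ_{r-1} - σ_r) / 2`.
-/

namespace ProjectorPerturbation

def topMask (n r : ℕ) : Matrix (Fin n) (Fin n) ℝ :=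
  diagonal fun k => if (k : ℕ) < r then 1 else 0

variable {n : ℕ}

theorem topMask_transpose (r : ℕ) : (topMask n r)ᵀ = topMask n r :=
  diagonal_transpose _

theorem topMask_mul_self (r : ℕ) : topMask n r * topMask n r = topMask n r := by
  simp only [topMask, diagonal_mul_diagonal]
  congr 1
  ext k
  split_ifs <;> simp

theorem topMask_mul_apply {r : ℕ} (A : Matrix (Fin n) (Fin n) ℝ) (k l : Fin n) :
    (topMask n r * A) k l = if (k : ℕ) < r then A k l else 0 := by
  simp [topMask, diagonal_mul]

theorem topMask_mul_mul_one_sub_apply {r : ℕ} (A : Matrix (Fin n) (Fin n) ℝ) (k l : Fin n) :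
    (topMask n r * A * (1 - topMask n r)) k l =
      if (k : ℕ) < r ∧ r ≤ (l : ℕ) then A k l else 0 := by
  simp only [Matrix.mul_sub, Matrix.mul_one, Matrix.sub_apply, topMask, mul_diagonal, diagonal_mul]
  by_cases hk : (k : ℕ) < r <;> by_cases hl : (l : ℕ) < r <;> simp [hk, hl]

theorem mem_orthogonalGroup_of_orthonormal_rows {u : Fin n → Fin n → ℝ}
    (hu : ∀ k l, ∑ i, u k i * u l i = if k = l then (1:ℝ) else 0) :
    of u ∈ orthogonalGroup (Fin n) ℝ := by
  rw [mem_orthogonalGroup_iff]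
  ext k l
  simpa [mul_apply, one_apply] using hu k l

theorem _root_.projOfTopSV.exists_orthogonal {M P : Matrix (Fin n) (Fin n) ℝ} {σ : Fin n → ℝ}
    {r : ℕ} (h : projOfTopSV M σ r P) :
    Antitone σ ∧ (∀ k, 0 ≤ σ k) ∧ ∃ U V : Matrix (Fin n) (Fin n) ℝ,
      U ∈ orthogonalGroup (Fin n) ℝ ∧ V ∈ orthogonalGroup (Fin n) ℝ ∧
      M = Uᵀ * diagonal σ * V ∧ P = Uᵀ * topMask n r * U := by
  obtain ⟨hσ, hσ0, u, v, hu, hv, hM, hP⟩ := h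
  refine ⟨hσ, hσ0, of u, of v, mem_orthogonalGroup_of_orthonormal_rows hu,
    mem_orthogonalGroup_of_orthonormal_rows hv, ?_, ?_⟩
  · ext i j
    rw [hM, mul_apply]
    simp only [mul_diagonal, transpose_apply, of_apply]
    exact Finset.sum_congr rfl fun k _ => by ring
  · ext i j
    rw [hP, mul_apply]
    simp only [topMask, mul_diagonal, transpose_apply, of_apply]
    exact Finset.sum_congr rfl fun k _ => by split_ifs <;> ring

theorem sum_sq_eq_trace_mul_transpose {ι κ : Type*} [Fintype ι] [Fintype κ] (A : Matrix ι κ ℝ) :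
    ∑ i, ∑ j, A i j ^ 2 = trace (A * Aᵀ) := by
  simp [trace, mul_apply, sq]

theorem sum_sq_le_sum_abs_mul_transpose {ι κ : Type*} [Fintype ι] [Fintype κ]
    (A : Matrix ι κ ℝ) : ∑ i, ∑ j, A i j ^ 2 ≤ ∑ i, ∑ j, |(A * Aᵀ) i j| := by
  rw [sum_sq_eq_trace_mul_transpose]
  exact Finset.sum_le_sum fun i _ => (le_abs_self _).trans
    (Finset.single_le_sum (fun j _ => abs_nonneg ((A * Aᵀ) i j)) (Finset.mem_univ i))

theorem trace_mul_le_iSup_mul_sum_abs {ι : Type*} [Fintype ι] (A B : Matrix ι ι ℝ) :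
    trace (A * B) ≤ (⨆ i, ⨆ j, |A i j|) * ∑ i, ∑ j, |B i j| := by
  have hA : ∀ i j, |A i j| ≤ ⨆ i, ⨆ j, |A i j| := fun i j =>
    (le_ciSup (Set.finite_range _).bddAbove j).trans
      (le_ciSup (f := fun i => ⨆ j, |A i j|) (Set.finite_range _).bddAbove i)
  calc trace (A * B) = ∑ i, ∑ j, A i j * B j i := by simp [trace, mul_apply]
    _ ≤ ∑ i, ∑ j, (⨆ i, ⨆ j, |A i j|) * |B j i| := by
        refine Finset.sum_le_sum fun i _ => Finset.sum_le_sum fun j _ => ?_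
        exact (le_abs_self _).trans
          ((abs_mul _ _).trans_le (mul_le_mul_of_nonneg_right (hA i j) (abs_nonneg _)))
    _ = (⨆ i, ⨆ j, |A i j|) * ∑ i, ∑ j, |B i j| := by
        rw [Finset.sum_comm, Finset.mul_sum]
        simp only [Finset.mul_sum]

theorem sqrt_sum_sq_add_le {ι : Type*} [Fintype ι] (a b : ι → ℝ) :
    √(∑ i, (a i + b i) ^ 2) ≤ √(∑ i, a i ^ 2) + √(∑ i, b i ^ 2) := by
  simpa [EuclideanSpace.norm_eq] using
    norm_add_le (WithLp.toLp 2 a : EuclideanSpace ℝ ι) (WithLp.toLp 2 b)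

theorem sqrt_sq_mul {a : ℝ} (ha : 0 ≤ a) (N : ℝ) : √(a ^ 2 * N) = a * √N := by
  rw [Real.sqrt_mul (sq_nonneg a), Real.sqrt_sq ha]

theorem sum_sq_mulVec_le {ι κ : Type*} [Fintype ι] [Fintype κ] (A : Matrix ι κ ℝ) (x : κ → ℝ) :
    ∑ i, (A *ᵥ x) i ^ 2 ≤ (∑ i, ∑ j, A i j ^ 2) * ∑ j, x j ^ 2 := by
  rw [Finset.sum_mul]
  gcongr with i
  exact Finset.sum_mul_sq_le_sq_mul_sq _ _ _

theorem sum_sq_mulVec_of_mem_orthogonalGroup {ι : Type*} [Fintype ι] [DecidableEq ι]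
    {U : Matrix ι ι ℝ} (hU : U ∈ orthogonalGroup ι ℝ) (x : ι → ℝ) :
    ∑ i, (U *ᵥ x) i ^ 2 = ∑ i, x i ^ 2 := by
  have h : Uᵀ *ᵥ (U *ᵥ x) = x := by
    rw [mulVec_mulVec, (mem_orthogonalGroup_iff' _ _).1 hU, one_mulVec]
  calc ∑ i, (U *ᵥ x) i ^ 2 = (U *ᵥ x) ⬝ᵥ (U *ᵥ x) := by simp [dotProduct, sq]
    _ = x ⬝ᵥ x := by rw [dotProduct_mulVec, ← mulVec_transpose, h]
    _ = ∑ i, x i ^ 2 := by simp [dotProduct, sq]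

theorem sum_sq_svd_mulVec {ι : Type*} [Fintype ι] [DecidableEq ι] {U : Matrix ι ι ℝ}
    (hU : U ∈ orthogonalGroup ι ℝ) (V : Matrix ι ι ℝ) (σ x : ι → ℝ) :
    ∑ i, ((Uᵀ * diagonal σ * V) *ᵥ x) i ^ 2 = ∑ j, (σ j * (V *ᵥ x) j) ^ 2 := by
  have hUt : Uᵀ ∈ orthogonalGroup ι ℝ := by
    rw [mem_orthogonalGroup_iff', transpose_transpose, ← mem_orthogonalGroup_iff]
    exact hU
  rw [← mulVec_mulVec, ← mulVec_mulVec, sum_sq_mulVec_of_mem_orthogonalGroup hUt]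
  simp [mulVec_diagonal]

theorem exists_ne_zero_mulVec_eq_zero_of_lt_of_gt (V V' : Matrix (Fin n) (Fin n) ℝ) (k : Fin n) :
    ∃ x ≠ 0, (∀ j < k, (V *ᵥ x) j = 0) ∧ ∀ j, k < j → (V' *ᵥ x) j = 0 := by
  set A : Matrix (Fin n) (Fin n) ℝ := of fun j => if j < k then V j else if k < j then V' j else 0
  obtain ⟨x, hx0, hAx⟩ :=
    exists_mulVec_eq_zero_iff.2 (det_eq_zero_of_row_eq_zero (A := A) k fun _ => by simp [A])
  refine ⟨x, hx0, fun j hj => ?_, fun j hj => ?_⟩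
  · simpa [A, mulVec, hj] using congrFun hAx j
  · simpa [A, mulVec, hj, lt_asymm hj] using congrFun hAx j

theorem sum_sq_mul_le_of_eq_zero {σ y : Fin n → ℝ} (hσ : Antitone σ) (hσ0 : ∀ j, 0 ≤ σ j)
    {k : Fin n} (hy : ∀ j < k, y j = 0) :
    ∑ j, (σ j * y j) ^ 2 ≤ σ k ^ 2 * ∑ j, y j ^ 2 := by
  rw [Finset.mul_sum]
  gcongr with j
  by_cases hj : j < k
  · simp [hy j hj]
  · rw [mul_pow]
    gcongr
    · exact hσ0 j
    · exact hσ (not_lt.1 hj)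

theorem le_sum_sq_mul_of_eq_zero {σ y : Fin n → ℝ} (hσ : Antitone σ) (hσ0 : ∀ j, 0 ≤ σ j)
    {k : Fin n} (hy : ∀ j, k < j → y j = 0) :
    σ k ^ 2 * ∑ j, y j ^ 2 ≤ ∑ j, (σ j * y j) ^ 2 := by
  rw [Finset.mul_sum]
  gcongr with j
  by_cases hj : k < j
  · simp [hy j hj]
  · rw [mul_pow]
    gcongr
    · exact hσ0 k
    · exact hσ (not_lt.1 hj)

/-- Weyl: test `M'` against a nonzero `x` in the span of `v'_0, …, v'_k` that is orthogonal to
`v_0, …, v_{k-1}`; then `‖M' x‖ ≥ σ'_k ‖x‖` and `‖M x‖ ≤ σ_k ‖x‖`. -/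
theorem weyl_le_add_sqrt_sum_sq_sub {M M' U V U' V' : Matrix (Fin n) (Fin n) ℝ}
    {σ σ' : Fin n → ℝ} (hU : U ∈ orthogonalGroup (Fin n) ℝ) (hV : V ∈ orthogonalGroup (Fin n) ℝ)
    (hU' : U' ∈ orthogonalGroup (Fin n) ℝ) (hV' : V' ∈ orthogonalGroup (Fin n) ℝ)
    (hMsvd : M = Uᵀ * diagonal σ * V) (hM'svd : M' = U'ᵀ * diagonal σ' * V')
    (hσ : Antitone σ) (hσ0 : ∀ j, 0 ≤ σ j) (hσ' : Antitone σ') (hσ'0 : ∀ j, 0 ≤ σ' j)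
    (k : Fin n) :
    σ' k ≤ σ k + √(∑ i, ∑ j, (M' - M) i j ^ 2) := by
  set ε := √(∑ i, ∑ j, (M' - M) i j ^ 2)
  obtain ⟨x, hx0, hVx, hV'x⟩ := exists_ne_zero_mulVec_eq_zero_of_lt_of_gt V V' k
  set N := ∑ j, x j ^ 2
  have hN : 0 < √N := Real.sqrt_pos.2 <| by
    obtain ⟨j, hj⟩ := Function.ne_iff.1 hx0
    exact Finset.sum_pos' (fun j _ => sq_nonneg _) ⟨j, Finset.mem_univ _, pow_two_pos_of_ne_zero hj⟩
  have hM' : σ' k * √N ≤ √(∑ i, (M' *ᵥ x) i ^ 2) := by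
    rw [← sqrt_sq_mul (hσ'0 k), hM'svd, sum_sq_svd_mulVec hU',
      show N = _ from (sum_sq_mulVec_of_mem_orthogonalGroup hV' x).symm]
    exact Real.sqrt_le_sqrt (le_sum_sq_mul_of_eq_zero hσ' hσ'0 hV'x)
  have hM : √(∑ i, (M *ᵥ x) i ^ 2) ≤ σ k * √N := by
    rw [← sqrt_sq_mul (hσ0 k), hMsvd, sum_sq_svd_mulVec hU,
      show N = _ from (sum_sq_mulVec_of_mem_orthogonalGroup hV x).symm]
    exact Real.sqrt_le_sqrt (sum_sq_mul_le_of_eq_zero hσ hσ0 hVx)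
  have hE : √(∑ i, ((M' - M) *ᵥ x) i ^ 2) ≤ ε * √N := by
    rw [← sqrt_sq_mul (Real.sqrt_nonneg _), Real.sq_sqrt (by positivity)]
    exact Real.sqrt_le_sqrt (sum_sq_mulVec_le _ x)
  have htri : √(∑ i, (M' *ᵥ x) i ^ 2) ≤
      √(∑ i, (M *ᵥ x) i ^ 2) + √(∑ i, ((M' - M) *ᵥ x) i ^ 2) := by
    rw [show M' *ᵥ x = M *ᵥ x + (M' - M) *ᵥ x by rw [sub_mulVec, add_sub_cancel]]
    exact sqrt_sum_sq_add_le _ _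
  exact le_of_mul_le_mul_right (by linarith) hN

/-- `M Mᵀ = Uᵀ Σ² U` and `Mᵀ M = Vᵀ Σ² V` coincide when `M` is symmetric. -/
theorem sq_diagonal_mul_comm_of_isSymm {M U V : Matrix (Fin n) (Fin n) ℝ} {σ : Fin n → ℝ}
    (hU : U ∈ orthogonalGroup (Fin n) ℝ) (hV : V ∈ orthogonalGroup (Fin n) ℝ)
    (hMsvd : M = Uᵀ * diagonal σ * V) (hM : M.IsSymm) :
    diagonal (fun j => σ j ^ 2) * (U * Vᵀ) = U * Vᵀ * diagonal (fun j => σ j ^ 2) := by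
  have hUU := (mem_orthogonalGroup_iff _ _).1 hU
  have hVV := (mem_orthogonalGroup_iff _ _).1 hV
  have hsq : diagonal (fun j => σ j ^ 2) = diagonal σ * diagonal σ := by
    simp [diagonal_mul_diagonal, sq]
  have key : Uᵀ * diagonal (fun j => σ j ^ 2) * U = Vᵀ * diagonal (fun j => σ j ^ 2) * V := by
    calc Uᵀ * diagonal (fun j => σ j ^ 2) * U = M * Mᵀ := by
          rw [hMsvd, hsq]
          simp only [transpose_mul, diagonal_transpose, transpose_transpose, Matrix.mul_assoc,
            ← Matrix.mul_assoc V Vᵀ, hVV, Matrix.one_mul]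
      _ = Mᵀ * M := by rw [hM.eq]
      _ = Vᵀ * diagonal (fun j => σ j ^ 2) * V := by
          rw [hMsvd, hsq]
          simp only [transpose_mul, diagonal_transpose, transpose_transpose, Matrix.mul_assoc,
            ← Matrix.mul_assoc U Uᵀ, hUU, Matrix.one_mul]
  calc diagonal (fun j => σ j ^ 2) * (U * Vᵀ)
      = U * (Uᵀ * diagonal (fun j => σ j ^ 2) * U) * Vᵀ := by
        simp only [Matrix.mul_assoc, ← Matrix.mul_assoc U Uᵀ, hUU, Matrix.one_mul]
    _ = U * Vᵀ * diagonal (fun j => σ j ^ 2) := by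
        rw [key]; simp only [Matrix.mul_assoc, hVV, Matrix.mul_one]

theorem topMask_mul_comm {r : ℕ} {τ : Fin n → ℝ} {C : Matrix (Fin n) (Fin n) ℝ}
    (hτ : ∀ k l : Fin n, (k : ℕ) < r → r ≤ (l : ℕ) → τ k ≠ τ l)
    (hC : diagonal τ * C = C * diagonal τ) :
    topMask n r * C = C * topMask n r := by
  ext k l
  have hkl := congrFun (congrFun hC k) l
  simp only [diagonal_mul, mul_diagonal] at hkl
  have hzero : τ k ≠ τ l → C k l = 0 := fun hne =>
    (mul_eq_zero.1 (by linarith : (τ k - τ l) * C k l = 0)).resolve_left (sub_ne_zero.2 hne)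
  simp only [topMask, diagonal_mul, mul_diagonal]
  by_cases hk : (k : ℕ) < r <;> by_cases hl : (l : ℕ) < r <;> simp only [hk, hl, if_true, if_false]
  · simp
  · simp [hzero (hτ k l hk (not_lt.1 hl))]
  · simp [hzero (hτ l k hl (not_lt.1 hk)).symm]
  · simp

theorem transpose_mul_topMask_mul_eq {U V : Matrix (Fin n) (Fin n) ℝ}
    (hU : U ∈ orthogonalGroup (Fin n) ℝ) (hV : V ∈ orthogonalGroup (Fin n) ℝ) {r : ℕ}
    (hC : topMask n r * (U * Vᵀ) = U * Vᵀ * topMask n r) :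
    Vᵀ * topMask n r * V = Uᵀ * topMask n r * U := by
  have hUU := (mem_orthogonalGroup_iff' _ _).1 hU
  have hVV := (mem_orthogonalGroup_iff' _ _).1 hV
  calc Vᵀ * topMask n r * V = Uᵀ * (U * Vᵀ * topMask n r) * V := by
        simp only [Matrix.mul_assoc, ← Matrix.mul_assoc Uᵀ U, hUU, Matrix.one_mul]
    _ = Uᵀ * topMask n r * U := by
        rw [← hC]; simp only [Matrix.mul_assoc, hVV, Matrix.mul_one]

theorem transpose_mul_topMask_mul_eq_of_isSymm {M U V : Matrix (Fin n) (Fin n) ℝ}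
    {σ : Fin n → ℝ} (hU : U ∈ orthogonalGroup (Fin n) ℝ) (hV : V ∈ orthogonalGroup (Fin n) ℝ)
    (hMsvd : M = Uᵀ * diagonal σ * V) (hM : M.IsSymm) (hσ0 : ∀ k, 0 ≤ σ k) {r : ℕ}
    (hgap : ∀ k l : Fin n, (k : ℕ) < r → r ≤ (l : ℕ) → σ l < σ k) :
    Vᵀ * topMask n r * V = Uᵀ * topMask n r * U :=
  transpose_mul_topMask_mul_eq hU hV <| topMask_mul_comm
    (fun k l hk hl => (pow_lt_pow_left₀ (hgap k l hk hl) (hσ0 l) two_ne_zero).ne')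
    (sq_diagonal_mul_comm_of_isSymm hU hV hMsvd hM)

theorem trace_sub_mul_transpose_sub {ι : Type*} [Fintype ι] [DecidableEq ι]
    {P P' : Matrix ι ι ℝ} (hP : P.IsSymm) (hP' : P'.IsSymm) (hPP : P * P = P) (hPP' : P' * P' = P')
    (htr : trace P = trace P') :
    trace ((P - P') * (P - P')ᵀ) = 2 * trace (P * (1 - P')) := by
  rw [transpose_sub, hP.eq, hP'.eq]
  simp only [sub_mul, mul_sub, hPP, hPP', mul_one, trace_sub, trace_mul_comm P' P, ← htr]
  ring

theorem isSymm_transpose_mul_topMask_mul (U : Matrix (Fin n) (Fin n) ℝ) (r : ℕ) :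
    (Uᵀ * topMask n r * U).IsSymm := by
  simp [IsSymm, transpose_mul, topMask_transpose, Matrix.mul_assoc]

theorem transpose_mul_topMask_mul_mul_self {U : Matrix (Fin n) (Fin n) ℝ}
    (hU : U ∈ orthogonalGroup (Fin n) ℝ) (r : ℕ) :
    Uᵀ * topMask n r * U * (Uᵀ * topMask n r * U) = Uᵀ * topMask n r * U := by
  have hUU := (mem_orthogonalGroup_iff _ _).1 hU
  simp only [Matrix.mul_assoc, ← Matrix.mul_assoc U Uᵀ, hUU, Matrix.one_mul]
  rw [← Matrix.mul_assoc (topMask n r), topMask_mul_self]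

theorem trace_transpose_mul_topMask_mul {U : Matrix (Fin n) (Fin n) ℝ}
    (hU : U ∈ orthogonalGroup (Fin n) ℝ) (r : ℕ) :
    trace (Uᵀ * topMask n r * U) = trace (topMask n r) := by
  rw [trace_mul_comm, ← Matrix.mul_assoc, (mem_orthogonalGroup_iff _ _).1 hU, Matrix.one_mul]

theorem trace_mul_one_sub_eq_sum_sq (U : Matrix (Fin n) (Fin n) ℝ) {U' : Matrix (Fin n) (Fin n) ℝ}
    (hU' : U' ∈ orthogonalGroup (Fin n) ℝ) (r : ℕ) :
    trace (Uᵀ * topMask n r * U * (1 - U'ᵀ * topMask n r * U')) =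
      ∑ k, ∑ l, (topMask n r * (U * U'ᵀ) * (1 - topMask n r)) k l ^ 2 := by
  set D := topMask n r
  have hDt : Dᵀ = D := topMask_transpose r
  have hDD : D * D = D := topMask_mul_self r
  have hQ : (1 - D) * (1 - D)ᵀ = 1 - D := by
    rw [transpose_sub, transpose_one, hDt, sub_mul, mul_sub, mul_sub, hDD]; simp
  have hU'U' := (mem_orthogonalGroup_iff' _ _).1 hU'
  have h1 : 1 - U'ᵀ * D * U' = U'ᵀ * (1 - D) * U' := by
    rw [Matrix.mul_sub, Matrix.sub_mul, Matrix.mul_one, hU'U']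
  set X := U * U'ᵀ * (1 - D) * U' * Uᵀ
  rw [sum_sq_eq_trace_mul_transpose, h1]
  calc trace (Uᵀ * D * U * (U'ᵀ * (1 - D) * U')) = trace (D * X) := by
        rw [Matrix.mul_assoc, Matrix.mul_assoc, trace_mul_comm]
        simp only [X, Matrix.mul_assoc]
    _ = trace (D * X * D) := by rw [trace_mul_comm (D * X) D, ← Matrix.mul_assoc D D X, hDD]
    _ = trace (D * (U * U'ᵀ) * ((1 - D) * (1 - D)ᵀ) * (U * U'ᵀ)ᵀ * D) := by
        rw [hQ]; simp only [X, transpose_mul, transpose_transpose, Matrix.mul_assoc]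
    _ = trace (D * (U * U'ᵀ) * (1 - D) * (D * (U * U'ᵀ) * (1 - D))ᵀ) := by
        simp only [transpose_mul, hDt, Matrix.mul_assoc]

theorem sum_sq_sub_eq_two_mul_sum_sq {U U' : Matrix (Fin n) (Fin n) ℝ}
    (hU : U ∈ orthogonalGroup (Fin n) ℝ) (hU' : U' ∈ orthogonalGroup (Fin n) ℝ) (r : ℕ) :
    ∑ i, ∑ j, (Uᵀ * topMask n r * U - U'ᵀ * topMask n r * U') i j ^ 2 =
      2 * ∑ k, ∑ l, (topMask n r * (U * U'ᵀ) * (1 - topMask n r)) k l ^ 2 := by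
  rw [sum_sq_eq_trace_mul_transpose, trace_sub_mul_transpose_sub
    (isSymm_transpose_mul_topMask_mul U r) (isSymm_transpose_mul_topMask_mul U' r)
    (transpose_mul_topMask_mul_mul_self hU r) (transpose_mul_topMask_mul_mul_self hU' r)
    (by rw [trace_transpose_mul_topMask_mul hU, trace_transpose_mul_topMask_mul hU']),
    trace_mul_one_sub_eq_sum_sq U hU']

theorem sum_sq_topMask_mul_eq_trace {W : Matrix (Fin n) (Fin n) ℝ}
    (hW : W ∈ orthogonalGroup (Fin n) ℝ) (U E : Matrix (Fin n) (Fin n) ℝ) (r : ℕ) :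
    ∑ k, ∑ l, (topMask n r * (U * E * Wᵀ)) k l ^ 2 = trace (Uᵀ * topMask n r * U * (E * Eᵀ)) := by
  set D := topMask n r
  have hWW := (mem_orthogonalGroup_iff' _ _).1 hW
  rw [sum_sq_eq_trace_mul_transpose]
  calc trace (D * (U * E * Wᵀ) * (D * (U * E * Wᵀ))ᵀ) = trace (D * (U * (E * Eᵀ) * Uᵀ) * D) := by
        simp only [transpose_mul, transpose_transpose, topMask_transpose, Matrix.mul_assoc, D]
        rw [← Matrix.mul_assoc Wᵀ W, hWW, Matrix.one_mul]
    _ = trace (D * (U * (E * Eᵀ) * Uᵀ)) := by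
        rw [trace_mul_comm, ← Matrix.mul_assoc D D, topMask_mul_self]
    _ = trace (Uᵀ * D * U * (E * Eᵀ)) := by
        rw [← Matrix.mul_assoc, trace_mul_comm]; simp only [Matrix.mul_assoc]

theorem eq_transpose_svd_of_isSymm {M U V : Matrix (Fin n) (Fin n) ℝ} {σ : Fin n → ℝ}
    (hMsvd : M = Uᵀ * diagonal σ * V) (hM : M.IsSymm) : M = Vᵀ * diagonal σ * U := by
  rw [← hM.eq, hMsvd]
  simp [transpose_mul, Matrix.mul_assoc]

/-- With `α = p b - a q` and `β = q b - a p`: `α + β = (p + q) (b - a)` and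
`α - β = (p - q) (b + a)`, both differences of singular values being at least `δ`. -/
theorem sq_mul_le_sq_add_sq {a b p q δ : ℝ} (hδ : 0 ≤ δ) (hb : 0 ≤ b) (hab : δ ≤ a - b) :
    δ ^ 2 * p ^ 2 ≤ (p * b - a * q) ^ 2 + (q * b - a * p) ^ 2 := by
  have h1 : δ ^ 2 ≤ (b - a) ^ 2 := by nlinarith
  have h2 : δ ^ 2 ≤ (b + a) ^ 2 := by nlinarith
  nlinarith [mul_le_mul_of_nonneg_right h1 (sq_nonneg (p + q)),
    mul_le_mul_of_nonneg_right h2 (sq_nonneg (p - q)), mul_nonneg (sq_nonneg δ) (sq_nonneg q)]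

theorem wedin_sum_sq_le {M M' U V U' V' : Matrix (Fin n) (Fin n) ℝ} {σ σ' : Fin n → ℝ}
    (hU : U ∈ orthogonalGroup (Fin n) ℝ) (hV : V ∈ orthogonalGroup (Fin n) ℝ)
    (hU' : U' ∈ orthogonalGroup (Fin n) ℝ) (hV' : V' ∈ orthogonalGroup (Fin n) ℝ)
    (hMsvd : M = Uᵀ * diagonal σ * V) (hM'svd : M' = U'ᵀ * diagonal σ' * V')
    (hM : M.IsSymm) (hM' : M'.IsSymm) (hσ'0 : ∀ l, 0 ≤ σ' l) {r : ℕ} {δ : ℝ} (hδ : 0 ≤ δ)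
    (hsep : ∀ k l : Fin n, (k : ℕ) < r → r ≤ (l : ℕ) → δ ≤ σ k - σ' l) :
    δ ^ 2 * ∑ k, ∑ l, (topMask n r * (U * U'ᵀ) * (1 - topMask n r)) k l ^ 2 ≤
      ∑ k, ∑ l, (topMask n r * (U * (M' - M) * V'ᵀ)) k l ^ 2 +
        ∑ k, ∑ l, (topMask n r * (V * (M' - M) * U'ᵀ)) k l ^ 2 := by
  have hUU := (mem_orthogonalGroup_iff _ _).1 hU
  have hVV := (mem_orthogonalGroup_iff _ _).1 hV
  have hU'U' := (mem_orthogonalGroup_iff _ _).1 hU'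
  have hV'V' := (mem_orthogonalGroup_iff _ _).1 hV'
  have hα : U * (M' - M) * V'ᵀ = U * U'ᵀ * diagonal σ' - diagonal σ * (V * V'ᵀ) := by
    rw [Matrix.mul_sub, Matrix.sub_mul, hM'svd, hMsvd]
    simp only [Matrix.mul_assoc, hV'V', ← Matrix.mul_assoc U Uᵀ, hUU, Matrix.mul_one,
      Matrix.one_mul]
  have hβ : V * (M' - M) * U'ᵀ = V * V'ᵀ * diagonal σ' - diagonal σ * (U * U'ᵀ) := by
    rw [Matrix.mul_sub, Matrix.sub_mul, eq_transpose_svd_of_isSymm hM'svd hM',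
      eq_transpose_svd_of_isSymm hMsvd hM]
    simp only [Matrix.mul_assoc, hU'U', ← Matrix.mul_assoc V Vᵀ, hVV, Matrix.mul_one,
      Matrix.one_mul]
  rw [hα, hβ, Finset.mul_sum, ← Finset.sum_add_distrib]
  refine Finset.sum_le_sum fun k _ => ?_
  rw [Finset.mul_sum, ← Finset.sum_add_distrib]
  refine Finset.sum_le_sum fun l _ => ?_
  rw [topMask_mul_mul_one_sub_apply, topMask_mul_apply, topMask_mul_apply]
  split_ifs with hkl hk hk
  · simp only [Matrix.sub_apply, mul_diagonal, diagonal_mul]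
    exact sq_mul_le_sq_add_sq hδ (hσ'0 l) (hsep k l hkl.1 hkl.2)
  · exact absurd hkl.1 hk
  all_goals rw [zero_pow two_ne_zero, mul_zero]; positivity

theorem sqrt_two_mul_le {X s Δ g : ℝ} (hX : 0 ≤ X) (hs : 0 ≤ s) (hΔ : 0 ≤ Δ) (hg : 2 * Δ < g)
    (h : (g - Δ) ^ 2 * X ≤ 2 * (s * Δ ^ 2)) : √(2 * X) ≤ 4 * Δ * √s / g := by
  have hg0 : 0 < g := by linarith
  rw [Real.sqrt_le_left (by positivity), div_pow, mul_pow, Real.sq_sqrt hs,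
    le_div_iff₀ (by positivity)]
  nlinarith [mul_le_mul_of_nonneg_right (by nlinarith : g ^ 2 ≤ 4 * (g - Δ) ^ 2) hX]

end ProjectorPerturbation

open ProjectorPerturbation in
/-- Sensitivity of projectors.  For symmetric `M, M'` with
`E = M' − M` satisfying `sqrt(∑|(EEᵀ)_{ij}|) ≤ Δ` and
`σ_r(M) − σ_{r+1}(M) > 2Δ`, the projectors `P, P'` onto the top-`r` singular
subspaces satisfy `‖P − P'‖_F ≤ 4Δ·sqrt(r·μ_r(M)/n)/(σ_r(M) − σ_{r+1}(M))`,
where `μ_r(M) = (n/r)·‖P‖_∞`. -/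
theorem stmt_8 (n r : ℕ) (hr0 : 0 < r) (hrn : r < n)
    (M M' P P' : Matrix (Fin n) (Fin n) ℝ) (hM : M.IsSymm) (hM' : M'.IsSymm)
    (σ σ' : Fin n → ℝ)
    (h1 : projOfTopSV M σ r P) (h2 : projOfTopSV M' σ' r P')
    (Δ : ℝ)
    (hΔ : Real.sqrt (∑ i, ∑ j, |((M' - M) * (M' - M)ᵀ) i j|) ≤ Δ)
    (hgap : 2 * Δ <
      σ ⟨r - 1, lt_of_le_of_lt (Nat.pred_le r) hrn⟩ - σ ⟨r, hrn⟩) :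
    Real.sqrt (∑ i, ∑ j, (P i j - P' i j) ^ 2) ≤
      4 * Δ * Real.sqrt (r * ((n / r : ℝ) * ⨆ i, ⨆ j, |P i j|) / n) /
        (σ ⟨r - 1, lt_of_le_of_lt (Nat.pred_le r) hrn⟩ - σ ⟨r, hrn⟩) := by
  obtain ⟨hσ, hσ0, U, V, hU, hV, hMsvd, hP⟩ := h1.exists_orthogonal
  obtain ⟨hσ', hσ'0, U', V', hU', hV', hM'svd, hP'⟩ := h2.exists_orthogonal
  set ra : Fin n := ⟨r - 1, lt_of_le_of_lt (Nat.pred_le r) hrn⟩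
  set rb : Fin n := ⟨r, hrn⟩
  set s := ⨆ i, ⨆ j, |P i j|
  have hΔ0 : 0 ≤ Δ := (Real.sqrt_nonneg _).trans hΔ
  have hweyl : σ' rb ≤ σ rb + Δ :=
    (weyl_le_add_sqrt_sum_sq_sub hU hV hU' hV' hMsvd hM'svd hσ hσ0 hσ' hσ'0 rb).trans <|
      add_le_add_right ((Real.sqrt_le_sqrt (sum_sq_le_sum_abs_mul_transpose _)).trans hΔ) _
  have hσa : ∀ k : Fin n, (k : ℕ) < r → σ ra ≤ σ k := fun k hk =>
    hσ (by simp [ra, Fin.le_def]; omega)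
  have hPV : Vᵀ * topMask n r * V = P := hP ▸ transpose_mul_topMask_mul_eq_of_isSymm hU hV hMsvd hM
    hσ0 fun k l hk hl => (hσ hl).trans_lt ((by linarith : σ rb < σ ra).trans_le (hσa k hk))
  have hwedin := wedin_sum_sq_le hU hV hU' hV' hMsvd hM'svd hM hM' hσ'0
    (by linarith : 0 ≤ σ ra - σ rb - Δ) fun k l hk hl =>
      by linarith [hσa k hk, hσ' (show rb ≤ l from hl)]
  rw [sum_sq_topMask_mul_eq_trace hV', sum_sq_topMask_mul_eq_trace hU', hPV, ← hP] at hwedin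
  have hs0 : 0 ≤ s := Real.iSup_nonneg fun i => Real.iSup_nonneg fun j => abs_nonneg _
  have hholder : trace (P * ((M' - M) * (M' - M)ᵀ)) ≤ s * Δ ^ 2 :=
    (trace_mul_le_iSup_mul_sum_abs _ _).trans
      (mul_le_mul_of_nonneg_left ((Real.sqrt_le_left hΔ0).1 hΔ) hs0)
  have hdiff := sum_sq_sub_eq_two_mul_sum_sq hU hU' r
  rw [← hP, ← hP'] at hdiff
  have hcast : (r : ℝ) * ((n / r : ℝ) * s) / n = s := by
    have : (n : ℝ) ≠ 0 := by exact_mod_cast (by omega : n ≠ 0)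
    field_simp
  rw [hcast, show ∑ i, ∑ j, (P i j - P' i j) ^ 2 = ∑ i, ∑ j, (P - P') i j ^ 2 from rfl, hdiff]
  exact sqrt_two_mul_le (by positivity) hs0 hΔ0 hgap (by linarith)
end

section
/- Let G and G' be edge-adjacent weighted n-vertex graphs (differing in a single edge of weight 1), with minimum degrees at least d_min ≥ 1. Then the entrywise ℓ1 distance between their normalized adjacency matrices satisfies ||D^{-1/2} A D^{-1/2} − D'^{-1/2} A' D'^{-1/2}||_1 ≤ 8/min{d_min(G), d_min(G')}. -/
/-! Write the normalized entries as `A i j * x i * x j` with `x i = 1 / √(d i)`. When `A ≤ A'`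
entrywise, each entrywise difference is bounded by three nonnegative pieces: the added weight at
fixed `x'`, and the decrease of `x i` and of `x j`. With `M` the total added weight and `δ` a lower
bound for the degrees, the first piece sums to at most `M / δ`. For the other two, the tangent
bound `d^(-1/2) - d'^(-1/2) ≤ (d' - d) / (2 d √δ)` (convexity of `t ↦ t^(-1/2)`) against the row
sums `∑ j, A i j * x j ≤ d i / √δ` gives `M / (2δ)` each; the third piece becomes a row sum by
symmetry of `A`. So the ℓ1 distance is at most `2M / δ`, and a single edge has `M = 2`. -/

lemma one_div_sub_one_div_le {x y : ℝ} (hx : 0 < x) (hxy : x ≤ y) :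
    1 / x - 1 / y ≤ (y ^ 2 - x ^ 2) / (2 * x ^ 3) := by
  have hy : 0 < y := hx.trans_le hxy
  rw [div_sub_div _ _ hx.ne' hy.ne', div_le_div_iff₀ (by positivity) (by positivity)]
  nlinarith [mul_nonneg (mul_nonneg hx.le hx.le)
      (mul_nonneg (sub_nonneg.2 hxy) (sub_nonneg.2 hxy)),
    mul_nonneg (mul_nonneg hx.le hy.le) (mul_nonneg hx.le (sub_nonneg.2 hxy)),
    mul_nonneg (mul_nonneg hx.le hx.le) (mul_nonneg hx.le (sub_nonneg.2 hxy))]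

lemma one_div_sqrt_sub_one_div_sqrt_le {δ u v : ℝ} (hδ : 0 < δ) (hδu : δ ≤ u) (huv : u ≤ v) :
    1 / √u - 1 / √v ≤ (v - u) / (2 * u * √δ) := by
  have hu : 0 < u := hδ.trans_le hδu
  calc 1 / √u - 1 / √v ≤ (√v ^ 2 - √u ^ 2) / (2 * √u ^ 3) :=
        one_div_sub_one_div_le (Real.sqrt_pos.2 hu) (Real.sqrt_le_sqrt huv)
    _ = (v - u) / (2 * u * √u) := by
        rw [Real.sq_sqrt hu.le, Real.sq_sqrt (hu.le.trans huv), pow_succ, Real.sq_sqrt hu.le,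
          mul_assoc]
    _ ≤ (v - u) / (2 * u * √δ) := by
        gcongr

lemma abs_mul_mul_sub_mul_mul_le {a a' x y x' y' : ℝ} (ha : 0 ≤ a) (haa' : a ≤ a')
    (hx' : 0 ≤ x') (hy' : 0 ≤ y') (hxx' : x' ≤ x) (hyy' : y' ≤ y) :
    |a * x * y - a' * x' * y'| ≤
      (a' - a) * x' * y' + a * (x - x') * y + a * (y - y') * x' := by
  have h₁ := mul_nonneg (mul_nonneg (sub_nonneg.2 haa') hx') hy'
  have h₂ := mul_nonneg (mul_nonneg ha (sub_nonneg.2 hxx')) (hy'.trans hyy')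
  have h₃ := mul_nonneg (mul_nonneg ha (sub_nonneg.2 hyy')) hx'
  rw [abs_le]
  constructor <;> nlinarith

lemma sum_sum_edge_indicator_eq_two {ι : Type*} [Fintype ι] [DecidableEq ι] {a b : ι}
    (hab : a ≠ b) :
    ∑ i, ∑ j, (if (i = a ∧ j = b) ∨ (i = b ∧ j = a) then (1 : ℝ) else 0) = 2 := by
  have hsplit : ∀ i j : ι, (if (i = a ∧ j = b) ∨ (i = b ∧ j = a) then (1 : ℝ) else 0) =
      (if i = a ∧ j = b then 1 else 0) + (if i = b ∧ j = a then 1 else 0) := by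
    intro i j
    by_cases h : i = a ∧ j = b
    · simp [h, hab]
    · simp [h]
  simp only [hsplit, Finset.sum_add_distrib, ite_and]
  norm_num

namespace Matrix

variable {ι : Type*} [Fintype ι]

noncomputable def normalizedAdj (A : Matrix ι ι ℝ) : Matrix ι ι ℝ :=
  fun i j => A i j / (√(∑ l, A i l) * √(∑ l, A j l))

lemma normalizedAdj_apply (A : Matrix ι ι ℝ) (i j : ι) :
    normalizedAdj A i j = A i j * (1 / √(∑ l, A i l)) * (1 / √(∑ l, A j l)) := by
  rw [normalizedAdj, mul_assoc, one_div_mul_one_div, mul_one_div]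

variable {A A' : Matrix ι ι ℝ} {δ : ℝ}

lemma sum_mul_le_of_le_one_div_sqrt (hA : ∀ i j, 0 ≤ A i j) {w : ι → ℝ}
    (hw : ∀ j, w j ≤ 1 / √δ) (i : ι) :
    ∑ j, A i j * w j ≤ (∑ j, A i j) / √δ := by
  rw [Finset.sum_div]
  gcongr with j
  rw [div_eq_mul_one_div]
  exact mul_le_mul_of_nonneg_left (hw j) (hA i j)

lemma sum_sum_mul_sub_one_div_sqrt_le (hA : ∀ i j, 0 ≤ A i j) (hδ : 0 < δ)
    (hδA : ∀ i, δ ≤ ∑ j, A i j) {d' : ι → ℝ} (hd' : ∀ i, ∑ j, A i j ≤ d' i) {w : ι → ℝ}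
    (hw₀ : ∀ j, 0 ≤ w j) (hw : ∀ j, w j ≤ 1 / √δ) :
    ∑ i, ∑ j, A i j * (1 / √(∑ l, A i l) - 1 / √(d' i)) * w j ≤
      (∑ i, (d' i - ∑ j, A i j)) / (2 * δ) := by
  rw [Finset.sum_div]
  gcongr with i
  set d := ∑ j, A i j
  have hd : 0 < d := hδ.trans_le (hδA i)
  calc ∑ j, A i j * (1 / √d - 1 / √(d' i)) * w j
      = (1 / √d - 1 / √(d' i)) * ∑ j, A i j * w j := by
        rw [Finset.mul_sum]; exact Finset.sum_congr rfl fun j _ => by ring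
    _ ≤ (d' i - d) / (2 * d * √δ) * (d / √δ) := by
        gcongr ?_ * ?_
        · exact Finset.sum_nonneg fun j _ => mul_nonneg (hA i j) (hw₀ j)
        · exact div_nonneg (sub_nonneg.2 (hd' i)) (by positivity)
        · exact one_div_sqrt_sub_one_div_sqrt_le hδ (hδA i) (hd' i)
        · exact sum_mul_le_of_le_one_div_sqrt hA hw i
    _ = (d' i - d) / (2 * δ) := by
        field_simp
        rw [Real.sq_sqrt hδ.le]

theorem sum_abs_normalizedAdj_sub_le (hA : A.IsSymm) (hA₀ : ∀ i j, 0 ≤ A i j)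
    (hAA' : ∀ i j, A i j ≤ A' i j) (hδ : 0 < δ) (hδA : ∀ i, δ ≤ ∑ j, A i j) :
    ∑ i, ∑ j, |normalizedAdj A i j - normalizedAdj A' i j| ≤
      2 * (∑ i, ∑ j, (A' i j - A i j)) / δ := by
  set x : ι → ℝ := fun i => 1 / √(∑ l, A i l)
  set x' : ι → ℝ := fun i => 1 / √(∑ l, A' i l)
  have hdd' : ∀ i, ∑ j, A i j ≤ ∑ j, A' i j := fun i => Finset.sum_le_sum fun j _ => hAA' i j
  have hx'x : ∀ i, x' i ≤ x i := fun i =>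
    one_div_le_one_div_of_le (Real.sqrt_pos.2 (hδ.trans_le (hδA i))) (Real.sqrt_le_sqrt (hdd' i))
  have hx'₀ : ∀ i, 0 ≤ x' i := fun i => by positivity
  have hxδ : ∀ i, x i ≤ 1 / √δ := fun i =>
    one_div_le_one_div_of_le (Real.sqrt_pos.2 hδ) (Real.sqrt_le_sqrt (hδA i))
  have hx'δ : ∀ i, x' i ≤ 1 / √δ := fun i => (hx'x i).trans (hxδ i)
  have hmass : ∑ i, (∑ j, A' i j - ∑ j, A i j) = ∑ i, ∑ j, (A' i j - A i j) := by
    simp only [Finset.sum_sub_distrib]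
  have hS₁ : ∑ i, ∑ j, (A' i j - A i j) * x' i * x' j ≤ (∑ i, ∑ j, (A' i j - A i j)) / δ := by
    have hx'x' : ∀ i j, x' i * x' j ≤ 1 / δ := fun i j => by
      calc x' i * x' j ≤ 1 / √δ * (1 / √δ) :=
            mul_le_mul (hx'δ i) (hx'δ j) (hx'₀ j) (by positivity)
        _ = 1 / δ := by rw [one_div_mul_one_div, Real.mul_self_sqrt hδ.le]
    rw [Finset.sum_div]
    gcongr with i
    rw [Finset.sum_div]
    gcongr with j
    rw [div_eq_mul_one_div, mul_assoc]
    exact mul_le_mul_of_nonneg_left (hx'x' i j) (sub_nonneg.2 (hAA' i j))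
  have hS₂ : ∑ i, ∑ j, A i j * (x i - x' i) * x j ≤ (∑ i, ∑ j, (A' i j - A i j)) / (2 * δ) :=
    hmass ▸ sum_sum_mul_sub_one_div_sqrt_le hA₀ hδ hδA hdd' (fun j => by positivity) hxδ
  have hS₃ : ∑ i, ∑ j, A i j * (x j - x' j) * x' i ≤
      (∑ i, ∑ j, (A' i j - A i j)) / (2 * δ) := by
    rw [Finset.sum_comm]
    simp only [hA.apply]
    exact hmass ▸ sum_sum_mul_sub_one_div_sqrt_le hA₀ hδ hδA hdd' hx'₀ hx'δ
  calc ∑ i, ∑ j, |normalizedAdj A i j - normalizedAdj A' i j|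
      ≤ ∑ i, ∑ j, ((A' i j - A i j) * x' i * x' j + A i j * (x i - x' i) * x j
          + A i j * (x j - x' j) * x' i) := by
        simp only [normalizedAdj_apply]
        gcongr with i _ j _
        exact abs_mul_mul_sub_mul_mul_le (hA₀ i j) (hAA' i j) (hx'₀ i) (hx'₀ j) (hx'x i) (hx'x j)
    _ = ∑ i, ∑ j, (A' i j - A i j) * x' i * x' j + ∑ i, ∑ j, A i j * (x i - x' i) * x j
          + ∑ i, ∑ j, A i j * (x j - x' j) * x' i := by
        simp only [Finset.sum_add_distrib]
    _ ≤ 2 * (∑ i, ∑ j, (A' i j - A i j)) / δ := by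
        refine (add_le_add (add_le_add hS₁ hS₂) hS₃).trans (le_of_eq ?_)
        field_simp
        ring

theorem sum_abs_normalizedAdj_sub_le_of_add_edge [DecidableEq ι] (hA : A.IsSymm)
    (hA₀ : ∀ i j, 0 ≤ A i j) {a b : ι} (hab : a ≠ b)
    (hE : ∀ i j, A' i j - A i j = if (i = a ∧ j = b) ∨ (i = b ∧ j = a) then (1 : ℝ) else 0)
    (hδ : 0 < δ) (hδA : ∀ i, δ ≤ ∑ j, A i j) :
    ∑ i, ∑ j, |normalizedAdj A i j - normalizedAdj A' i j| ≤ 4 / δ := by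
  have hAA' : ∀ i j, A i j ≤ A' i j := fun i j => by
    have := hE i j
    split_ifs at this <;> linarith
  calc ∑ i, ∑ j, |normalizedAdj A i j - normalizedAdj A' i j|
      ≤ 2 * (∑ i, ∑ j, (A' i j - A i j)) / δ := sum_abs_normalizedAdj_sub_le hA hA₀ hAA' hδ hδA
    _ = 4 / δ := by
        simp only [hE, sum_sum_edge_indicator_eq_two hab]
        norm_num

end Matrix

/-- Let `G, G'` be edge-adjacent weighted graphs on `n+1`
vertices (their adjacency matrices differ in a single edge of weight 1), with
all degrees at least 1.  Then the entrywise ℓ1 distance between their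
normalized adjacency matrices `D^{-1/2} A D^{-1/2}` is at most
`8 / min{d_min(G), d_min(G')}`. -/
theorem stmt_11 (n : ℕ) (A A' : Matrix (Fin (n + 1)) (Fin (n + 1)) ℝ)
    (hA : A.IsSymm) (hA' : A'.IsSymm)
    (hApos : ∀ i j, 0 ≤ A i j) (hA'pos : ∀ i j, 0 ≤ A' i j)
    (hadj : ∃ a b : Fin (n + 1), a ≠ b ∧
      ((∀ i j, A' i j - A i j =
          if (i = a ∧ j = b) ∨ (i = b ∧ j = a) then (1:ℝ) else 0) ∨
       (∀ i j, A i j - A' i j =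
          if (i = a ∧ j = b) ∨ (i = b ∧ j = a) then (1:ℝ) else 0)))
    (hd : ∀ i, 1 ≤ ∑ j, A i j) (hd' : ∀ i, 1 ≤ ∑ j, A' i j) :
    ∑ i, ∑ j,
        |A i j / (Real.sqrt (∑ l, A i l) * Real.sqrt (∑ l, A j l)) -
          A' i j / (Real.sqrt (∑ l, A' i l) * Real.sqrt (∑ l, A' j l))| ≤
      8 / min (⨅ i, ∑ j, A i j) (⨅ i, ∑ j, A' i j) := by
  set δ := min (⨅ i, ∑ j, A i j) (⨅ i, ∑ j, A' i j)
  have hδ : 0 < δ := zero_lt_one.trans_le (le_min (le_ciInf hd) (le_ciInf hd'))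
  have hδA : ∀ i, δ ≤ ∑ j, A i j := fun i =>
    (min_le_left _ _).trans (ciInf_le (Set.finite_range _).bddBelow i)
  have hδA' : ∀ i, δ ≤ ∑ j, A' i j := fun i =>
    (min_le_right _ _).trans (ciInf_le (Set.finite_range _).bddBelow i)
  have h48 : 4 / δ ≤ 8 / δ := by gcongr; norm_num
  obtain ⟨a, b, hab, hE | hE⟩ := hadj
  · exact (Matrix.sum_abs_normalizedAdj_sub_le_of_add_edge hA hApos hab hE hδ hδA).trans h48
  · calc _ = ∑ i, ∑ j, |Matrix.normalizedAdj A' i j - Matrix.normalizedAdj A i j| :=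
          Finset.sum_congr rfl fun i _ => Finset.sum_congr rfl fun j _ => abs_sub_comm _ _
      _ ≤ 8 / δ :=
          (Matrix.sum_abs_normalizedAdj_sub_le_of_add_edge hA' hA'pos hab hE hδ hδA').trans h48
end
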